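/- For integers n ≥ 0 and m, the monomial rⁿsᵐ lies in B if and only if −n ≤ m ≤ 2n and m ≠ 2n − 1; moreover B is the ℂ-linear span of these monomials. (Monomial description of the coordinate ring of the ruled surface z³ = xy², exhibiting the 'gaps' shown in Figure 3 of the paper.) -/

import Mathlib

/-!
The monomials of `B` are the `rⁿsᵐ` with `(n, m)` in the additive monoid generated by
`(1, 0)`, `(1, -1)` and `(1, 2)`, and `B` is spanned by them, as for the adjoin of any set of
monomials in a monoid algebra. Each generator satisfies `-n ≤ m ≤ 2n`, `m ≠ 2n - 1`, and these
conditions are stable under addition. Conversely, padding with copies of `(1, 0)`, `m ≤ 0` is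
reached with `-m` copies of `(1, -1)`, even `m > 0` with `m / 2` copies of `(1, 2)`, and odd
`m > 0` with `(m + 1) / 2` copies of `(1, 2)` and one of `(1, -1)`; the odd case needs
`(m + 3) / 2 ≤ n`, which excludes exactly `m = 2n - 1`.
-/

/-- The ring `ℂ[r, s, s⁻¹]` of polynomials in `r` that are Laurent polynomials
in `s`, realized as the monoid algebra of `ℕ × ℤ` over `ℂ`. -/
abbrev PolyLaurent : Type := AddMonoidAlgebra ℂ (ℕ × ℤ)

/-- The monomial `rⁿ sᵐ` in `ℂ[r, s, s⁻¹]`. -/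
noncomputable def mono (n : ℕ) (m : ℤ) : PolyLaurent :=
  AddMonoidAlgebra.single (n, m) 1

/-- The coordinate ring `B` of the cubic ruled surface `z³ = x y²`: the
subalgebra of `ℂ[r, s, s⁻¹]` generated by `r`, `r·s⁻¹` and `r·s²`. -/
noncomputable def ruledB : Subalgebra ℂ PolyLaurent :=
  Algebra.adjoin ℂ {mono 1 0, mono 1 (-1), mono 1 2}

namespace AddMonoidAlgebra

variable {R M : Type*} [AddMonoid M]

theorem submonoidClosure_image_single_one [Semiring R] (s : Set M) :
    (Submonoid.closure ((single · (1 : R)) '' s) : Set R[M]) =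
      (single · 1) '' AddSubmonoid.closure s := by
  apply subset_antisymm
  · intro x hx
    induction hx using Submonoid.closure_induction with
    | mem x hx => exact Set.image_mono AddSubmonoid.subset_closure hx
    | one => exact ⟨0, zero_mem _, rfl⟩
    | mul x y _ _ hx hy =>
      obtain ⟨a, ha, rfl⟩ := hx
      obtain ⟨b, hb, rfl⟩ := hy
      exact ⟨a + b, add_mem ha hb, by simp [single_mul_single]⟩
  · rintro x ⟨m, hm, rfl⟩
    induction hm using AddSubmonoid.closure_induction with
    | mem m hm => exact Submonoid.subset_closure ⟨m, hm, rfl⟩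
    | zero => exact one_mem _
    | add a b _ _ ha hb => simpa [single_mul_single] using mul_mem ha hb

theorem adjoin_image_single_one [CommSemiring R] (s : Set M) :
    Subalgebra.toSubmodule (Algebra.adjoin R ((single · (1 : R)) '' s)) =
      Submodule.span R ((single · 1) '' AddSubmonoid.closure s) := by
  rw [Algebra.adjoin_eq_span, submonoidClosure_image_single_one]

end AddMonoidAlgebra

def ruledExponents : AddSubmonoid (ℕ × ℤ) :=
  AddSubmonoid.closure {(1, 0), (1, -1), (1, 2)}

theorem exists_nat_combination_of_ruled_bounds {n : ℕ} {m : ℤ}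
    (h : -(n : ℤ) ≤ m ∧ m ≤ 2 * (n : ℤ) ∧ m ≠ 2 * (n : ℤ) - 1) :
    ∃ i j k : ℕ, n = i + j + k ∧ m = 2 * k - j := by
  obtain ⟨h1, h2, h3⟩ := h
  rcases le_or_gt m 0 with hm | hm
  · exact ⟨n - (-m).toNat, (-m).toNat, 0, by omega, by omega⟩
  · rcases Int.even_or_odd m with ⟨t, ht⟩ | ⟨t, ht⟩
    · exact ⟨n - t.toNat, 0, t.toNat, by omega, by omega⟩
    · exact ⟨n - t.toNat - 2, 1, t.toNat + 1, by omega, by omega⟩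

theorem mem_ruledExponents_iff (p : ℕ × ℤ) :
    p ∈ ruledExponents ↔
      (-(p.1 : ℤ) ≤ p.2 ∧ p.2 ≤ 2 * (p.1 : ℤ) ∧ p.2 ≠ 2 * (p.1 : ℤ) - 1) := by
  constructor
  · intro h
    induction h using AddSubmonoid.closure_induction with
    | mem x hx => rcases hx with rfl | rfl | rfl <;> norm_num
    | zero => norm_num
    | add x y _ _ hx hy =>
      simp only [Prod.fst_add, Prod.snd_add, Nat.cast_add] at *
      omega
  · obtain ⟨n, m⟩ := p
    intro h
    obtain ⟨i, j, k, rfl, rfl⟩ := exists_nat_combination_of_ruled_bounds h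
    have : ((i + j + k : ℕ), (2 * k - j : ℤ)) = i • (1, 0) + j • (1, -1) + k • (1, 2) := by
      ext <;> simp; ring
    rw [this]
    refine add_mem (add_mem (nsmul_mem ?_ i) (nsmul_mem ?_ j)) (nsmul_mem ?_ k) <;>
    exact AddSubmonoid.subset_closure (by simp)

theorem toSubmodule_ruledB :
    Subalgebra.toSubmodule ruledB =
      Submodule.span ℂ ((fun p : ℕ × ℤ ↦ mono p.1 p.2) '' ruledExponents) := by
  have generators : ({mono 1 0, mono 1 (-1), mono 1 2} : Set PolyLaurent) =
      (AddMonoidAlgebra.single · 1) '' {(1, 0), (1, -1), (1, 2)} := by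
    simp [mono, Set.image_insert_eq]
  rw [ruledB, generators, AddMonoidAlgebra.adjoin_image_single_one]
  rfl

theorem ruled_surface_monomials :
    (∀ (n : ℕ) (m : ℤ),
      mono n m ∈ ruledB ↔
        (-(n : ℤ) ≤ m ∧ m ≤ 2 * (n : ℤ) ∧ m ≠ 2 * (n : ℤ) - 1)) ∧
    Subalgebra.toSubmodule ruledB =
      Submodule.span ℂ {x : PolyLaurent | ∃ (n : ℕ) (m : ℤ),
        (-(n : ℤ) ≤ m ∧ m ≤ 2 * (n : ℤ) ∧ m ≠ 2 * (n : ℤ) - 1) ∧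
        x = mono n m} := by
  refine ⟨fun n m ↦ ?_, ?_⟩
  · rw [← Subalgebra.mem_toSubmodule, toSubmodule_ruledB,
      ← mem_ruledExponents_iff (n, m)]
    exact AddMonoidAlgebra.single_mem_span_single
  · rw [toSubmodule_ruledB]
    congr 1
    ext x
    simp [mem_ruledExponents_iff, eq_comm]
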